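/- arXiv:1706.00407 — 2 statements merged into one kernel-verified Lean document; each statement's English description precedes it below -/
import Mathlib

section
/- For all integers m and all positive integers n, L_m * (sum over k from 1 to n of (-1)^{k(m-1)} L_{2mk}) = (-1)^{n(m-1)} L_{2mn+m} - L_m. -/
/-- Fibonacci numbers extended to all integers via `F_{-n} = (-1)^{n-1} F_n`. -/
def fibZ (n : ℤ) : ℤ :=
  if 0 ≤ n then (Nat.fib n.toNat : ℤ) else (-1) ^ ((-n).toNat + 1) * (Nat.fib (-n).toNat : ℤ)

/-- Lucas numbers extended to all integers, `L_n = F_{n-1} + F_{n+1}`. -/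
def lucasZ (n : ℤ) : ℤ := fibZ (n - 1) + fibZ (n + 1)

/-!
Binet's formula `L_n = φ ^ n + ψ ^ n` together with `φ ψ = -1` gives the product rule
`L_m L_b = L_{m+b} + (-1)^m L_{b-m}`. Taking `b = 2mk` and multiplying by `(-1)^{k(m-1)}`, the
`k`-th summand becomes `t_k - t_{k-1}` with `t_k = (-1)^{k(m-1)} L_{2mk+m}`, so the sum telescopes
to `t_n - t_0`.
-/

open Real goldenRatio

theorem fibZ_eq_intFib (n : ℤ) : fibZ n = Int.fib n := by
  obtain ⟨k, rfl | rfl⟩ := n.eq_nat_or_neg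
  · simp [fibZ]
  · rcases Nat.eq_zero_or_pos k with rfl | hk
    · simp [fibZ]
    · rw [fibZ, if_neg (by omega), Int.fib_neg_natCast]
      simp

theorem lucasZ_eq_goldenRatio_zpow_add (n : ℤ) : (lucasZ n : ℝ) = φ ^ n + ψ ^ n := by
  have hφ : φ ^ (n - 1) + φ ^ (n + 1) = √5 * φ ^ n := by
    rw [zpow_sub_one₀ goldenRatio_ne_zero, zpow_add_one₀ goldenRatio_ne_zero, inv_goldenRatio,
      ← goldenRatio_sub_goldenConj]
    ring
  have hψ : ψ ^ (n - 1) + ψ ^ (n + 1) = -√5 * ψ ^ n := by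
    rw [zpow_sub_one₀ goldenConj_ne_zero, zpow_add_one₀ goldenConj_ne_zero, inv_goldenConj,
      ← goldenRatio_sub_goldenConj]
    ring
  have h5 : √5 ≠ 0 := by positivity
  simp only [lucasZ, Int.cast_add, fibZ_eq_intFib, coe_intFib_eq]
  field_simp
  linear_combination hφ - hψ

theorem lucasZ_mul_lucasZ (m b : ℤ) :
    lucasZ m * lucasZ b = lucasZ (m + b) + m.negOnePow * lucasZ (b - m) := by
  have hφ : φ ^ m ≠ 0 := zpow_ne_zero m goldenRatio_ne_zero
  have hψ : ψ ^ m ≠ 0 := zpow_ne_zero m goldenConj_ne_zero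
  have hφψ : (-1) ^ m = φ ^ m * ψ ^ m := by rw [← mul_zpow, goldenRatio_mul_goldenConj]
  apply Int.cast_injective (α := ℝ)
  push_cast
  simp only [lucasZ_eq_goldenRatio_zpow_add, Int.cast_negOnePow, hφψ,
    zpow_add₀ goldenRatio_ne_zero, zpow_add₀ goldenConj_ne_zero, zpow_sub₀ goldenRatio_ne_zero,
    zpow_sub₀ goldenConj_ne_zero]
  field_simp
  ring

theorem lucasZ_mul_signed_lucasZ_two_mul_succ (m k : ℤ) :
    lucasZ m * (((k + 1) * (m - 1)).negOnePow * lucasZ (2 * m * (k + 1)))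
      = ((k + 1) * (m - 1)).negOnePow * lucasZ (2 * m * (k + 1) + m)
        - (k * (m - 1)).negOnePow * lucasZ (2 * m * k + m) := by
  have hsign : (((k + 1) * (m - 1)).negOnePow * m.negOnePow : ℤ) = -(k * (m - 1)).negOnePow := by
    rw [← Units.val_mul, ← Int.negOnePow_add,
      show (k + 1) * (m - 1) + m = k * (m - 1) + 2 * m - 1 by ring, Int.negOnePow_sub,
      Int.negOnePow_add, Int.negOnePow_two_mul, Int.negOnePow_one]
    simp
  have hprod := lucasZ_mul_lucasZ m (2 * m * (k + 1))
  rw [show m + 2 * m * (k + 1) = 2 * m * (k + 1) + m by ring,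
    show 2 * m * (k + 1) - m = 2 * m * k + m by ring] at hprod
  linear_combination (((k + 1) * (m - 1)).negOnePow : ℤ) * hprod + lucasZ (2 * m * k + m) * hsign

theorem stmt8_general (m : ℤ) (n : ℕ) :
    lucasZ m * ∑ k ∈ Finset.Icc 1 n,
        (((-1 : ℤˣ) ^ ((k : ℤ) * (m - 1)) : ℤˣ) : ℤ) * lucasZ (2 * m * k)
      = (((-1 : ℤˣ) ^ ((n : ℤ) * (m - 1)) : ℤˣ) : ℤ) * lucasZ (2 * m * n + m) - lucasZ m := by
  simp only [← Int.negOnePow_def]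
  induction n with
  | zero => simp
  | succ n ih =>
    rw [Finset.sum_Icc_succ_top (by omega), mul_add, ih, Nat.cast_succ,
      lucasZ_mul_signed_lucasZ_two_mul_succ]
    ring

theorem stmt8 (m : ℤ) (n : ℕ) (hn : 0 < n) :
    lucasZ m * ∑ k ∈ Finset.Icc 1 n,
        (((-1 : ℤˣ) ^ ((k : ℤ) * (m - 1)) : ℤˣ) : ℤ) * lucasZ (2 * m * k)
      = (((-1 : ℤˣ) ^ ((n : ℤ) * (m - 1)) : ℤˣ) : ℤ) * lucasZ (2 * m * n + m) - lucasZ m :=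
  stmt8_general m n
end

section
/- For every positive integer n, sum over k from 1 to n of L_k^4 equals 5 F_{2n+1} F_{n-1} F_{n+2} + 6n - 5. -/
lemma fibZ_natCast (n : ℕ) : fibZ (n : ℤ) = (Nat.fib n : ℤ) := by
  simp [fibZ]

lemma cassini (m : ℕ) :
    ((Nat.fib (m+1) : ℤ)^2 - Nat.fib (m+1) * Nat.fib m - (Nat.fib m : ℤ)^2)^2 = 1 := by
  induction m with
  | zero => simp
  | succ m ih =>
    have h : (Nat.fib (m+2) : ℤ) = Nat.fib m + Nat.fib (m+1) := by
      rw [Nat.fib_add_two]; push_cast; ring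
    rw [h]
    linear_combination ih

lemma key (m : ℕ) :
    ∑ k ∈ Finset.Icc 1 (m+1), lucasZ (k : ℤ) ^ 4
      = 5 * Nat.fib (2*m+3) * Nat.fib m * Nat.fib (m+3) + 6 * (m+1) - 5 := by
  induction m with
  | zero =>
    norm_num [lucasZ, fibZ]
  | succ m ih =>
    rw [Finset.sum_Icc_succ_top (by omega), ih]
    have hl : lucasZ ((m+2 : ℕ) : ℤ) = (Nat.fib (m+1) : ℤ) + Nat.fib (m+3) := by
      unfold lucasZ
      have h1 : ((m+2 : ℕ) : ℤ) - 1 = ((m+1 : ℕ) : ℤ) := by push_cast; ring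
      have h2 : ((m+2 : ℕ) : ℤ) + 1 = ((m+3 : ℕ) : ℤ) := by push_cast; ring
      rw [h1, h2, fibZ_natCast, fibZ_natCast]
    rw [hl]
    have e1 : Nat.fib (2*m+3) = Nat.fib (m+2)^2 + Nat.fib (m+1)^2 := by
      have := Nat.fib_two_mul_add_one (m+1)
      simpa [show 2*(m+1)+1 = 2*m+3 from by ring] using this
    have e2 : Nat.fib (2*(m+1)+3) = Nat.fib (m+3)^2 + Nat.fib (m+2)^2 := by
      have := Nat.fib_two_mul_add_one (m+2)
      simpa [show 2*(m+2)+1 = 2*(m+1)+3 from by ring] using this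
    have f2 : (Nat.fib (m+2) : ℤ) = Nat.fib m + Nat.fib (m+1) := by
      rw [Nat.fib_add_two]; push_cast; ring
    have f3 : (Nat.fib (m+3) : ℤ) = Nat.fib (m+1) + Nat.fib (m+2) := by
      rw [show m+3 = (m+1)+2 from rfl, Nat.fib_add_two]; push_cast; ring
    have f4 : (Nat.fib (m+1+3) : ℤ) = Nat.fib (m+2) + Nat.fib (m+3) := by
      rw [show m+1+3 = (m+2)+2 from rfl, Nat.fib_add_two]; push_cast; ring
    have h := cassini m
    have e1' : (Nat.fib (2*m+3) : ℤ) = (Nat.fib (m+2) : ℤ)^2 + (Nat.fib (m+1) : ℤ)^2 := by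
      rw [e1]; push_cast; ring
    have e2' : (Nat.fib (2*(m+1)+3) : ℤ) = (Nat.fib (m+3) : ℤ)^2 + (Nat.fib (m+2) : ℤ)^2 := by
      rw [e2]; push_cast; ring
    rw [e1', e2', f4, f3, f2]
    push_cast
    linear_combination (6 : ℤ) * h

theorem stmt12 (n : ℕ) (hn : 0 < n) :
    ∑ k ∈ Finset.Icc 1 n, lucasZ k ^ 4
      = 5 * fibZ (2 * n + 1) * fibZ ((n : ℤ) - 1) * fibZ (n + 2) + 6 * n - 5 := by
  obtain ⟨m, rfl⟩ : ∃ m, n = m + 1 := ⟨n - 1, by omega⟩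
  have h1 : 2 * ((m+1 : ℕ) : ℤ) + 1 = ((2*m+3 : ℕ) : ℤ) := by push_cast; ring
  have h2 : ((m+1 : ℕ) : ℤ) - 1 = ((m : ℕ) : ℤ) := by push_cast; ring
  have h3 : ((m+1 : ℕ) : ℤ) + 2 = ((m+3 : ℕ) : ℤ) := by push_cast; ring
  rw [h1, h2, h3, fibZ_natCast, fibZ_natCast, fibZ_natCast, key m]
  push_cast
  ring
end
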